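/- If 𝐓 is an ℵ₁-tree with at most ℵ₁-many cofinal branches (|B(𝐓)| ≤ ℵ₁), then ◇(𝐓) holds. -/

import Mathlib

noncomputable section

open Cardinal Set

/-- The first uncountable ordinal `ω₁`. -/
def omega1 : Ordinal := (Cardinal.aleph 1).ord

/-- A transfinite binary sequence: a function `t : α → 2` for some ordinal `α`. -/
abbrev BinSeq : Type 1 := Σ α : Ordinal, (Set.Iio α → Bool)

namespace BinSeq

/-- The restriction `t ↾ β` of a binary sequence `t` to an initial segment of its domain. -/
def restrict (t : BinSeq) (β : Ordinal) (h : β ≤ t.1) : BinSeq :=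
  ⟨β, fun x => t.2 ⟨x.1, lt_of_lt_of_le x.2 h⟩⟩

/-- `s.sub t`: `s` is an initial segment of `t` (that is, `s ⊆ t`). -/
def sub (s t : BinSeq) : Prop := ∃ h : s.1 ≤ t.1, t.restrict s.1 h = s

/-- `s.ssub t`: `s` is a proper initial segment of `t` (that is, `s ⊊ t`). -/
def ssub (s t : BinSeq) : Prop := ∃ h : s.1 < t.1, t.restrict s.1 h.le = s

end BinSeq

/-- A candidate branch: a function `f : ω₁ → 2`. -/
abbrev BinBranch : Type 1 := Set.Iio omega1 → Bool

/-- The restriction `f ↾ α` of `f : ω₁ → 2` to an ordinal `α < ω₁`. -/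
def BinBranch.restrict (f : BinBranch) (α : Ordinal) (h : α < omega1) : BinSeq :=
  ⟨α, fun x => f ⟨x.1, lt_trans x.2 h⟩⟩

/-- `C` is a closed unbounded (club) subset of `ω₁`: it is a set of countable ordinals,
unbounded in `ω₁`, and closed under suprema of bounded nonempty subsets. -/
def IsClubBelow (C : Set Ordinal) : Prop :=
  C ⊆ Set.Iio omega1 ∧
  (∀ β < omega1, ∃ α ∈ C, β < α) ∧
  (∀ s : Set Ordinal, s ⊆ C → s.Nonempty → sSup s < omega1 → sSup s ∈ C)

/-- `S` is a stationary subset of `ω₁`: it meets every club subset of `ω₁`. -/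
def IsStationaryBelow (S : Set Ordinal) : Prop :=
  ∀ C : Set Ordinal, IsClubBelow C → (S ∩ C).Nonempty

/-- `T` is a binary ℵ₁-tree: a downward closed family of binary sequences of
countable length, all of whose levels are countable. -/
structure IsBinaryAleph1Tree (T : Set BinSeq) : Prop where
  dom_lt : ∀ t ∈ T, t.1 < omega1
  downward_closed : ∀ t ∈ T, ∀ β, ∀ h : β ≤ t.1, t.restrict β h ∈ T
  countable_levels : ∀ α < omega1, {t | t ∈ T ∧ t.1 = α}.Countable

/-- The set of cofinal branches of a binary tree:
functions `f : ω₁ → 2` all of whose initial segments lie in `T`. -/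
def BinBranches (T : Set BinSeq) : Set BinBranch :=
  {f | ∀ α, ∀ h : α < omega1, f.restrict α h ∈ T}

/-- A binary Kurepa tree: a binary ℵ₁-tree with at least ℵ₂-many cofinal branches. -/
def IsBinaryKurepa (T : Set BinSeq) : Prop :=
  IsBinaryAleph1Tree T ∧ Cardinal.aleph 2 ≤ #(↥(BinBranches T))

/-- `◇(T)` for a binary tree `T`: there is a transversal `⟨t_α | α < ω₁⟩` with `t_α ∈ T_α`
such that for every cofinal branch `f` of `T`, the set `{α < ω₁ | f ↾ α = t_α}` is stationary. -/
def BinDiamond (T : Set BinSeq) : Prop :=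
  ∃ t : Ordinal → BinSeq,
    (∀ α < omega1, t α ∈ T ∧ (t α).1 = α) ∧
    ∀ f ∈ BinBranches T,
      IsStationaryBelow {α | ∃ h : α < omega1, BinBranch.restrict f α h = t α}

/-- An abstract tree: a strict partial order in which the set of predecessors
of every point is well-ordered. -/
structure OTree where
  carrier : Type
  lt : carrier → carrier → Prop
  lt_trans : ∀ {x y z}, lt x y → lt y z → lt x z
  lt_irrefl : ∀ x, ¬ lt x x
  pred_wellOrder : ∀ x, IsWellOrder {y // lt y x} fun a b => lt a.1 b.1

namespace OTree

/-- The height of a node: the order type of its set of predecessors. -/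
def height (t : OTree) (x : t.carrier) : Ordinal :=
  @Ordinal.type {y // t.lt y x} (fun a b => t.lt a.1 b.1) (t.pred_wellOrder x)

/-- The `α`-th level of the tree. -/
def level (t : OTree) (α : Ordinal) : Set t.carrier := {x | t.height x = α}

/-- An ℵ₁-tree: a tree of height `ω₁` all of whose levels are countable. -/
def IsAleph1Tree (t : OTree) : Prop :=
  (∀ x, t.height x < omega1) ∧
  (∀ α < omega1, (t.level α).Nonempty) ∧
  (∀ α < omega1, (t.level α).Countable)

/-- A tree is Hausdorff if nodes of the same limit height
with the same predecessors are equal. -/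
def Hausdorff (t : OTree) : Prop :=
  ∀ x y : t.carrier, Order.IsSuccLimit (t.height x) → t.height x = t.height y →
    {z | t.lt z x} = {z | t.lt z y} → x = y

/-- The set of cofinal branches: uncountable maximal chains. -/
def branches (t : OTree) : Set (Set t.carrier) :=
  {C | IsMaxChain t.lt C ∧ ¬ C.Countable}

/-- A Kurepa tree: an ℵ₁-tree with at least ℵ₂-many cofinal branches. -/
def IsKurepa (t : OTree) : Prop :=
  t.IsAleph1Tree ∧ Cardinal.aleph 2 ≤ #(↥t.branches)

/-- `◇(𝐓)`: there is a transversal `⟨b_α | α < ω₁⟩` with `b_α ∈ T_α` such that for every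
cofinal branch `f`, the set `{α < ω₁ | f ↾ α = b_α}` (i.e. the set of `α < ω₁` such that
`b_α` is the unique element of `f` on the `α`-th level) is stationary. -/
def Diamond (t : OTree) : Prop :=
  ∃ b : Ordinal → t.carrier,
    (∀ α < omega1, b α ∈ t.level α) ∧
    ∀ f ∈ t.branches,
      IsStationaryBelow {α | α < omega1 ∧ f ∩ t.level α = {b α}}

/-- A tree has height `ω₁` if every node has countable height
and every countable level is nonempty. -/
def HasHeightOmega1 (t : OTree) : Prop :=
  (∀ x, t.height x < omega1) ∧ ∀ α < omega1, (t.level α).Nonempty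

end OTree


/-!
Ulam's matrix argument yields `ℵ₁` pairwise disjoint stationary subsets of `ω₁`, so each cofinal
branch `f` can be given its own stationary set `S_f`. A cofinal branch meets every countable level
in exactly one node, so letting `b_α` be the node of `f` on level `α` whenever `α ∈ S_f` (and any
node of level `α` otherwise) guesses every branch on a stationary set.
-/

open Ordinal Function

theorem omega1_eq_omega_one : omega1 = ω₁ := ord_aleph 1

theorem cof_Iio_omega1 : Order.cof (Iio omega1) = ℵ₁ := by
  rw [Ordinal.cof_Iio, ← Ordinal.lift_cof, omega1_eq_omega_one, cof_omega_one]
  simp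

theorem countable_Iio_of_lt_omega1 {o : Ordinal} (h : o < omega1) : (Iio o).Countable := by
  rw [← Cardinal.le_aleph0_iff_set_countable, Cardinal.mk_Iio_ordinal, Cardinal.lift_le_aleph0,
    ← Cardinal.lt_aleph_one_iff]
  exact Cardinal.lt_ord.mp h

theorem not_countable_Iio_omega1 : ¬ (Iio omega1).Countable := by
  rw [← Cardinal.le_aleph0_iff_set_countable, Cardinal.mk_Iio_ordinal, omega1, Cardinal.card_ord]
  simp

theorem isSuccLimit_omega1 : Order.IsSuccLimit omega1 :=
  Cardinal.isSuccLimit_ord (Cardinal.aleph0_le_aleph 1)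

instance : NoMaxOrder (Iio omega1) :=
  ⟨fun x => ⟨⟨Order.succ x.1, isSuccLimit_omega1.succ_lt x.2⟩, Order.lt_succ x.1⟩⟩

theorem IsClubBelow.isClub_preimage_val {C : Set Ordinal} (hC : IsClubBelow C) :
    IsClub (Subtype.val ⁻¹' C : Set (Iio omega1)) := by
  refine ⟨dirSupClosed_iff_of_linearOrder.2 fun d hdC hd a ha => ?_, fun x => ?_⟩
  · have hle : sSup (Subtype.val '' d) ≤ a.1 :=
      csSup_le (hd.image _) (by rintro _ ⟨y, hy, rfl⟩; exact ha.1 hy)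
    have hub : (⟨_, hle.trans_lt a.2⟩ : Iio omega1) ∈ upperBounds d :=
      fun y hy => le_csSup Ordinal.bddAbove_of_small (mem_image_of_mem _ hy)
    have hsup : sSup (Subtype.val '' d) = a.1 := hle.antisymm (ha.2 hub)
    rw [mem_preimage, ← hsup]
    exact hC.2.2 _ (image_subset_iff.2 hdC) (hd.image _) (hsup ▸ a.2)
  · obtain ⟨α, hαC, hxα⟩ := hC.2.1 x.1 x.2
    exact ⟨⟨α, hC.1 hαC⟩, hαC, hxα.le⟩

theorem IsStationary.isStationaryBelow_image_val {S : Set (Iio omega1)} (hS : IsStationary S) :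
    IsStationaryBelow (Subtype.val '' S) := fun _ hC =>
  let ⟨x, hxS, hxC⟩ := hS hC.isClub_preimage_val
  ⟨x.1, mem_image_of_mem _ hxS, hxC⟩

theorem IsStationaryBelow.mono {S S' : Set Ordinal} (hS : IsStationaryBelow S) (h : S ⊆ S') :
    IsStationaryBelow S' := fun C hC => (hS C hC).mono (inter_subset_inter_left C h)

section UlamMatrix

variable {α : Type*} [LinearOrder α]

def ulamMatrix (e : ∀ β : α, Iio β → ℕ) (n : ℕ) (ξ : α) : Set α :=
  {β | ∃ h : ξ < β, e β ⟨ξ, h⟩ = n}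

theorem iUnion_ulamMatrix (e : ∀ β : α, Iio β → ℕ) (ξ : α) : ⋃ n, ulamMatrix e n ξ = Ioi ξ := by
  ext β
  simp [ulamMatrix]

theorem disjoint_ulamMatrix {e : ∀ β : α, Iio β → ℕ} (he : ∀ β, Injective (e β)) (n : ℕ)
    {ξ ξ' : α} (h : ξ ≠ ξ') : Disjoint (ulamMatrix e n ξ) (ulamMatrix e n ξ') :=
  disjoint_left.2 fun β ⟨_, hn⟩ ⟨_, hn'⟩ => h (congrArg Subtype.val (he β (hn.trans hn'.symm)))

theorem exists_isStationary_ulamMatrix [WellFoundedLT α] [NoMaxOrder α] (hα : Order.cof α ≠ ℵ₀)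
    (e : ∀ β : α, Iio β → ℕ) (ξ : α) : ∃ n, IsStationary (ulamMatrix e n ξ) := by
  rw [← isStationary_iUnion_iff_of_countable hα, iUnion_ulamMatrix]
  refine IsStationary.of_not_isCofinal_compl ?_
  rw [not_isCofinal_iff_bddAbove, compl_Ioi]
  exact bddAbove_Iic

end UlamMatrix

theorem exists_pairwise_disjoint_isStationary {ι : Type*} (hι : #ι ≤ ℵ₁) :
    ∃ S : ι → Set (Iio omega1), (∀ i, IsStationary (S i)) ∧ Pairwise (Disjoint on S) := by
  have hcof : Order.cof (Iio omega1) ≠ ℵ₀ := cof_Iio_omega1 ▸ Cardinal.aleph0_lt_aleph_one.ne'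
  have hcount (β : Iio omega1) : Countable (Iio β) :=
    ((countable_Iio_of_lt_omega1 β.2).preimage Subtype.val_injective).to_subtype
  -- Every column `ξ` has a stationary entry, in row `N ξ`; uncountably many columns share a row `m`,
  -- and the entries of a row are pairwise disjoint.
  choose e he using fun β : Iio omega1 => exists_injective_nat (Iio β)
  choose N hN using exists_isStationary_ulamMatrix hcof e
  obtain ⟨m, hm⟩ : ∃ m, ¬ (N ⁻¹' {m}).Countable := by
    by_contra! h
    refine not_countable_Iio_omega1 (countable_coe_iff.1 (countable_univ_iff.1 ?_))
    exact (countable_iUnion h).mono fun x _ => mem_iUnion.2 ⟨N x, rfl⟩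
  obtain ⟨j⟩ : Nonempty (ι ↪ N ⁻¹' {m}) := by
    rw [← Cardinal.lift_mk_le']
    calc Cardinal.lift #ι ≤ ℵ₁ := by simpa using hι
      _ ≤ Cardinal.lift #(N ⁻¹' {m}) := by
        rw [Cardinal.aleph_one_le_iff, Cardinal.aleph0_lt_lift, ← not_le,
          Cardinal.le_aleph0_iff_set_countable]
        exact hm
  refine ⟨fun i => ulamMatrix e m (j i), fun i => ?_, fun i i' hii' => ?_⟩
  · have hji : N (j i) = m := (j i).2
    simpa only [hji] using hN (j i)
  · exact disjoint_ulamMatrix he m fun h => hii' (j.injective (Subtype.ext h))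

theorem exists_pairwise_disjoint_isStationaryBelow {ι : Type*} (hι : #ι ≤ ℵ₁) :
    ∃ S : ι → Set Ordinal, (∀ i, IsStationaryBelow (S i)) ∧ (∀ i, S i ⊆ Iio omega1) ∧
      Pairwise (Disjoint on S) := by
  obtain ⟨S, hS, hdisj⟩ := exists_pairwise_disjoint_isStationary hι
  exact ⟨fun i => Subtype.val '' S i, fun i => (hS i).isStationaryBelow_image_val,
    fun i => image_subset_iff.2 fun x _ => x.2,
    fun i i' h => (disjoint_image_iff Subtype.val_injective).2 (hdisj h)⟩

namespace OTree

variable {t : OTree}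

theorem height_val_eq_typein {y : t.carrier} (a : {z // t.lt z y}) :
    t.height a.1 = @Ordinal.typein _ (fun a b => t.lt a.1 b.1) (t.pred_wellOrder y) a := by
  let := t.pred_wellOrder y
  rw [← Ordinal.type_subrel]
  let := t.pred_wellOrder a.1
  exact RelIso.ordinalType_congr
    ⟨⟨fun w => ⟨⟨w.1, t.lt_trans w.2 a.2⟩, w.2⟩, fun b => ⟨b.1.1, b.2⟩, fun _ => rfl, fun _ => rfl⟩,
      Iff.rfl⟩

theorem height_lt_height {x y : t.carrier} (h : t.lt x y) : t.height x < t.height y := by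
  let := t.pred_wellOrder y
  rw [height_val_eq_typein ⟨x, h⟩]
  exact Ordinal.typein_lt_type _ _

theorem exists_lt_height_eq {y : t.carrier} {α : Ordinal} (h : α < t.height y) :
    ∃ z, t.lt z y ∧ t.height z = α := by
  let := t.pred_wellOrder y
  obtain ⟨a, ha⟩ := Ordinal.typein_surj (fun a b : {z // t.lt z y} => t.lt a.1 b.1) h
  exact ⟨a.1, a.2, (height_val_eq_typein a).trans ha⟩

theorem lt_trichotomy_of_lt_of_lt {y z w : t.carrier} (hz : t.lt z y) (hw : t.lt w y) :
    t.lt z w ∨ z = w ∨ t.lt w z := by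
  let := t.pred_wellOrder y
  rcases trichotomous_of (fun a b : {v // t.lt v y} => t.lt a.1 b.1) ⟨z, hz⟩ ⟨w, hw⟩ with h | h | h
  · exact Or.inl h
  · exact Or.inr (Or.inl (congrArg Subtype.val h))
  · exact Or.inr (Or.inr h)

theorem _root_.IsMaxChain.mem_of_lt {f : Set t.carrier} (hf : IsMaxChain t.lt f)
    {x z : t.carrier} (hx : x ∈ f) (h : t.lt z x) : z ∈ f := by
  have hcomp : ∀ a ∈ f, z ≠ a → t.lt z a ∨ t.lt a z := by
    intro a ha hza
    rcases eq_or_ne a x with rfl | hax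
    · exact Or.inl h
    rcases hf.1 ha hx hax with hlt | hlt
    · rcases lt_trichotomy_of_lt_of_lt h hlt with h' | h' | h'
      · exact Or.inl h'
      · exact absurd h' hza
      · exact Or.inr h'
    · exact Or.inl (t.lt_trans h hlt)
  have hchain : IsChain t.lt (insert z f) := hf.1.insert hcomp
  exact hf.2 hchain (subset_insert z f) ▸ mem_insert z f

theorem _root_.IsChain.subsingleton_inter_level {f : Set t.carrier} (hf : IsChain t.lt f)
    (α : Ordinal) : (f ∩ t.level α).Subsingleton := by
  rintro x ⟨hx, hxα⟩ y ⟨hy, hyα⟩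
  by_contra hne
  rcases hf hx hy hne with h | h
  · exact (height_lt_height h).ne (hxα.trans hyα.symm)
  · exact (height_lt_height h).ne (hyα.trans hxα.symm)

theorem exists_mem_lt_height_of_mem_branches (hlev : ∀ α < omega1, (t.level α).Countable)
    {f : Set t.carrier} (hf : f ∈ t.branches) {β : Ordinal} (hβ : β < omega1) :
    ∃ x ∈ f, β < t.height x := by
  by_contra! hbdd
  have hsub : f ⊆ ⋃ γ ∈ Iio (Order.succ β), t.level γ := fun x hx =>
    mem_biUnion (Order.lt_succ_iff.2 (hbdd x hx)) rfl
  have hsucc : Order.succ β < omega1 := isSuccLimit_omega1.succ_lt hβ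
  exact hf.2 <| ((countable_Iio_of_lt_omega1 hsucc).biUnion fun γ hγ =>
    hlev γ ((mem_Iio.1 hγ).trans hsucc)).mono hsub

theorem inter_level_nonempty_of_mem_branches (hlev : ∀ α < omega1, (t.level α).Countable)
    {f : Set t.carrier} (hf : f ∈ t.branches) {α : Ordinal} (hα : α < omega1) :
    (f ∩ t.level α).Nonempty := by
  obtain ⟨y, hy, hαy⟩ := exists_mem_lt_height_of_mem_branches hlev hf hα
  obtain ⟨z, hzy, hz⟩ := exists_lt_height_eq hαy
  exact ⟨z, hf.1.mem_of_lt hy hzy, hz⟩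

end OTree

/-- If `𝐓` is an ℵ₁-tree with at most ℵ₁-many cofinal branches,
then `◇(𝐓)` holds. -/
theorem statement6 (t : OTree) (h1 : t.IsAleph1Tree)
    (h2 : #(↥t.branches) ≤ Cardinal.aleph 1) : t.Diamond := by
  obtain ⟨S, hS, hSlt, hdisj⟩ := exists_pairwise_disjoint_isStationaryBelow h2
  let P (α : Ordinal) (x : t.carrier) := x ∈ t.level α ∧ ∀ f : t.branches, α ∈ S f → x ∈ f.1
  have hnode : ∀ α < omega1, ∃ x, P α x := by
    intro α hα
    rcases em (∃ f, α ∈ S f) with ⟨f, hf⟩ | h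
    · obtain ⟨x, hxf, hxα⟩ := OTree.inter_level_nonempty_of_mem_branches h1.2.2 f.2 hα
      exact ⟨x, hxα, fun g hg => hdisj.eq (not_disjoint_iff.2 ⟨α, hg, hf⟩) ▸ hxf⟩
    · exact (h1.2.1 α hα).imp fun x hx => ⟨hx, fun f hf => (h ⟨f, hf⟩).elim⟩
  have : Nonempty t.carrier := (h1.2.1 0 (omega1_eq_omega_one ▸ omega_pos 1)).to_subtype.map (↑)
  refine ⟨fun α => Classical.epsilon (P α), fun α hα => (Classical.epsilon_spec (hnode α hα)).1,
    fun f hf => (hS ⟨f, hf⟩).mono fun α hα => ⟨hSlt _ hα, ?_⟩⟩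
  have hb := Classical.epsilon_spec (hnode α (hSlt _ hα))
  exact (hf.1.isChain.subsingleton_inter_level α).eq_singleton_of_mem ⟨hb.2 ⟨f, hf⟩ hα, hb.1⟩
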